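/- Define the differential operator D₂ acting on smooth functions f : ℝ → ℝ by D₂ f := S(S(−f'' − 6 sech²·f + f)), where S u := u' + tanh·u, i.e. D₂ = (d/dx + tanh(x))∘(d/dx + tanh(x))∘(−d²/dx² − 6 sech²(x) + 1). Then for all x ∈ ℝ, D₂( sech − 2 sech³ )(x) = 48 sech³(x) − 264 sech⁵(x) + 240 sech⁷(x). -/

import Mathlib

open Real

noncomputable def sech (x : ℝ) : ℝ := (Real.cosh x)⁻¹

/-- The operator `S = d/dx + tanh(x)`. -/
noncomputable def Sop (f : ℝ → ℝ) : ℝ → ℝ := fun x => deriv f x + Real.tanh x * f x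

/-- The operator `L₊ = −d²/dx² − 6 sech²(x) + 1`. -/
noncomputable def Lplus (f : ℝ → ℝ) : ℝ → ℝ :=
  fun x => -deriv (deriv f) x - 6 * sech x ^ 2 * f x + f x

/-- The operator `D₂ = S ∘ S ∘ L₊`. -/
noncomputable def D2 (f : ℝ → ℝ) : ℝ → ℝ := Sop (Sop (Lplus f))

/-!
Everything stays a polynomial in `sech` and `tanh`: from `sech' = -tanh · sech`, `tanh' = sech²`
and `tanh² = 1 - sech²` one gets `(sechⁿ)' = -n tanh · sechⁿ` and
`(tanh · sechⁿ)' = (n + 1) sechⁿ⁺² - n sechⁿ`.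
Hence `L₊ (sech - 2 sech³) = 12 sech³ - 12 sech⁵`, whose image under `S` is
`48 tanh · sech⁵ - 24 tanh · sech³`, and one more application of `S` gives the claim.
-/

theorem tanh_sq_eq_one_sub_sech_sq (x : ℝ) : tanh x ^ 2 = 1 - sech x ^ 2 := by
  have hc := (cosh_pos x).ne'
  rw [tanh_eq_sinh_div_cosh, sech]
  field_simp
  linear_combination -cosh_sq' x

theorem hasDerivAt_tanh (x : ℝ) : HasDerivAt tanh (sech x ^ 2) x := by
  have hc := (cosh_pos x).ne'
  rw [funext tanh_eq_sinh_div_cosh]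
  refine ((hasDerivAt_sinh x).div (hasDerivAt_cosh x) hc).congr_deriv ?_
  rw [sech]
  field_simp
  linear_combination cosh_sq' x

theorem hasDerivAt_sech (x : ℝ) : HasDerivAt sech (-(tanh x * sech x)) x := by
  have hc := (cosh_pos x).ne'
  refine ((hasDerivAt_cosh x).inv hc).congr_deriv ?_
  rw [sech, tanh_eq_sinh_div_cosh]
  field_simp

theorem hasDerivAt_sech_pow (n : ℕ) (x : ℝ) :
    HasDerivAt (fun y => sech y ^ n) (-(n * (tanh x * sech x ^ n))) x := by
  refine ((hasDerivAt_sech x).fun_pow n).congr_deriv ?_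
  rcases n with _ | n
  · simp
  · push_cast
    ring

theorem hasDerivAt_tanh_mul_sech_pow (n : ℕ) (x : ℝ) :
    HasDerivAt (fun y => tanh y * sech y ^ n)
      ((n + 1) * sech x ^ (n + 2) - n * sech x ^ n) x := by
  refine ((hasDerivAt_tanh x).fun_mul (hasDerivAt_sech_pow n x)).congr_deriv ?_
  linear_combination -(n : ℝ) * sech x ^ n * tanh_sq_eq_one_sub_sech_sq x

theorem Sop_apply_of_hasDerivAt {f : ℝ → ℝ} {f' x : ℝ} (hf : HasDerivAt f f' x) :
    Sop f x = f' + tanh x * f x := by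
  rw [Sop, hf.deriv]

theorem hasDerivAt_tanh_mul_sech (x : ℝ) :
    HasDerivAt (fun y => tanh y * sech y) (2 * sech x ^ 3 - sech x) x := by
  simpa [one_add_one_eq_two] using hasDerivAt_tanh_mul_sech_pow 1 x

theorem deriv_sech_sub_two_mul_sech_pow_three :
    deriv (fun y => sech y - 2 * sech y ^ 3)
      = fun x => 6 * (tanh x * sech x ^ 3) - tanh x * sech x := by
  funext x
  refine (((hasDerivAt_sech x).fun_sub
    ((hasDerivAt_sech_pow 3 x).const_mul 2)).congr_deriv ?_).deriv
  push_cast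
  ring

theorem Lplus_sech_sub_two_mul_sech_pow_three :
    Lplus (fun y => sech y - 2 * sech y ^ 3) = fun x => 12 * sech x ^ 3 - 12 * sech x ^ 5 := by
  funext x
  rw [Lplus, deriv_sech_sub_two_mul_sech_pow_three,
    (((hasDerivAt_tanh_mul_sech_pow 3 x).const_mul 6).fun_sub (hasDerivAt_tanh_mul_sech x)).deriv]
  push_cast
  ring

/-- Identity (1.48) in the proof of Lemma 1.6:
`D₂(sech − 2 sech³) = 48 sech³ − 264 sech⁵ + 240 sech⁷`. -/
theorem D2_identity :
    ∀ x : ℝ,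
      D2 (fun y => sech y - 2 * sech y ^ 3) x
        = 48 * sech x ^ 3 - 264 * sech x ^ 5 + 240 * sech x ^ 7 := by
  have Sop_Lplus : Sop (fun y => 12 * sech y ^ 3 - 12 * sech y ^ 5)
      = fun x => 48 * (tanh x * sech x ^ 5) - 24 * (tanh x * sech x ^ 3) := by
    funext x
    rw [Sop_apply_of_hasDerivAt (((hasDerivAt_sech_pow 3 x).const_mul 12).fun_sub
      ((hasDerivAt_sech_pow 5 x).const_mul 12))]
    push_cast
    ring
  intro x
  rw [D2, Lplus_sech_sub_two_mul_sech_pow_three, Sop_Lplus, Sop_apply_of_hasDerivAt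
    (((hasDerivAt_tanh_mul_sech_pow 5 x).const_mul 48).fun_sub
      ((hasDerivAt_tanh_mul_sech_pow 3 x).const_mul 24))]
  push_cast
  linear_combination (48 * sech x ^ 5 - 24 * sech x ^ 3) * tanh_sq_eq_one_sub_sech_sq x
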